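/- Every formula built from ⊤, ⊥, atoms, →, ∧, and ∀ is equal, modulo the congruence generated by the type-isomorphism equations (associativity of ∧, units A∧⊤=A=⊤∧A, currying (A∧B)→C = A→(B→C), ⊤→A=A, distribution A→(B∧C) = (A→B)∧(A→C), A→⊤=⊤, ∀x(A∧B)=∀xA∧∀xB, ∀x⊤=⊤, and A→∀xB = ∀x(A→B) for x not free in A), to a formula in canonical form. -/

import Mathlib

/-- First-order formulas: ⊤, ⊥, non-constant atoms `X t⃗` (atoms applied to
de Bruijn term-variable indices), implication, conjunction and universal
quantification (de Bruijn style: `all A` binds index 0). -/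
inductive Formula : Type where
  | top : Formula
  | bot : Formula
  | atom : ℕ → List ℕ → Formula
  | arr : Formula → Formula → Formula
  | and : Formula → Formula → Formula
  | all : Formula → Formula

/-- The measure φ on formulas. -/
def phi : Formula → ℕ
  | .top => 2
  | .bot => 2
  | .atom _ _ => 2
  | .and A B => 2 * (phi A + 1) * phi B
  | .arr A B => phi B ^ phi A
  | .all A => phi A ^ 2

/-- The measure ψ on formulas. -/
def psi : Formula → ℕ
  | .top => 2
  | .bot => 2
  | .atom _ _ => 2
  | .and A B => 2 * (psi A + 1) * psi B
  | .arr A B => psi B ^ psi A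
  | .all A => 2 * psi A

/-- Shift the free de Bruijn term-variable indices ≥ c up by one. -/
def Formula.shiftFrom : ℕ → Formula → Formula
  | _, .top => .top
  | _, .bot => .bot
  | c, .atom X args => .atom X (args.map fun n => if n < c then n else n + 1)
  | c, .arr A B => .arr (A.shiftFrom c) (B.shiftFrom c)
  | c, .and A B => .and (A.shiftFrom c) (B.shiftFrom c)
  | c, .all A => .all (A.shiftFrom (c + 1))

/-- `A.shift` is A regarded under one more binder ("x not free in A"). -/
def Formula.shift (A : Formula) : Formula := A.shiftFrom 0

/-- The congruence generated by the type-isomorphism equations. -/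
inductive Iso : Formula → Formula → Prop where
  | andAssoc (A B C) : Iso (.and A (.and B C)) (.and (.and A B) C)
  | andTopR (A) : Iso (.and A .top) A
  | andTopL (A) : Iso (.and .top A) A
  | curry (A B C) : Iso (.arr (.and A B) C) (.arr A (.arr B C))
  | topArr (A) : Iso (.arr .top A) A
  | distrib (A B C) : Iso (.arr A (.and B C)) (.and (.arr A B) (.arr A C))
  | arrTop (A) : Iso (.arr A .top) .top
  | allAnd (A B) : Iso (.all (.and A B)) (.and (.all A) (.all B))
  | allTop : Iso (.all .top) .top
  | arrAll (A B) : Iso (.arr A (.all B)) (.all (.arr A.shift B))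
  | refl (A) : Iso A A
  | symm {A B} : Iso A B → Iso B A
  | trans {A B C} : Iso A B → Iso B C → Iso A C
  | arrCong {A A' B B'} : Iso A A' → Iso B B' → Iso (.arr A B) (.arr A' B')
  | andCong {A A' B B'} : Iso A A' → Iso B B' → Iso (.and A B) (.and A' B')
  | allCong {A A'} : Iso A A' → Iso (.all A) (.all A')

/-- Canonical atoms: R ::= atom | ⊥. -/
inductive IsR : Formula → Prop where
  | atom (X ts) : IsR (.atom X ts)
  | bot : IsR .bot

mutual
/-- Canonical →-forms: A ::= R | Q→A. -/
inductive IsA : Formula → Prop where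
  | ofR {A} : IsR A → IsA A
  | arr {Q A} : IsQ Q → IsA A → IsA (.arr Q A)

/-- Canonical ∀-forms: Q ::= A | ∀x Q. -/
inductive IsQ : Formula → Prop where
  | ofA {A} : IsA A → IsQ A
  | all {A} : IsQ A → IsQ (.all A)
end

/-- Canonical conjunctions: B ::= Q | B∧Q. -/
inductive IsB : Formula → Prop where
  | ofQ {A} : IsQ A → IsB A
  | and {B Q} : IsB B → IsQ Q → IsB (.and B Q)

/-- Canonical forms: C ::= B | ⊤. -/
inductive IsC : Formula → Prop where
  | ofB {A} : IsB A → IsC A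
  | top : IsC .top

/-! Canonical forms are closed under the formula constructors up to isomorphism, so a formula
is normalised bottom-up. Conjunctions of canonical `B`s re-associate to the left; `∀` distributes
over `∧`; in `b₁ → b₂` one distributes over the conjuncts of `b₂`, curries away the conjuncts of
`b₁`, and pulls each `∀` of the codomain out past the (shifted, still canonical) premise. The units
`⊤` are absorbed by the remaining equations. -/

mutual
theorem IsA.shiftFrom {A : Formula} : IsA A → ∀ c, IsA (A.shiftFrom c)
  | .ofR (.atom _ _), _ => .ofR (.atom _ _)
  | .ofR .bot, _ => .ofR .bot
  | .arr hQ hA, c => .arr (hQ.shiftFrom c) (hA.shiftFrom c)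

theorem IsQ.shiftFrom {Q : Formula} : IsQ Q → ∀ c, IsQ (Q.shiftFrom c)
  | .ofA hA, c => .ofA (hA.shiftFrom c)
  | .all hQ, c => .all (hQ.shiftFrom (c + 1))
end

theorem IsQ.exists_iso_arr {q₁ q₂ : Formula} (h₁ : IsQ q₁) :
    IsQ q₂ → ∃ q, Iso (.arr q₁ q₂) q ∧ IsQ q
  | .ofA h₂ => ⟨_, .refl _, .ofA (.arr h₁ h₂)⟩
  | .all (A := q₂) h₂ =>
    have ⟨q, hiso, hq⟩ := (h₁.shiftFrom 0).exists_iso_arr h₂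
    ⟨.all q, (Iso.arrAll q₁ q₂).trans (.allCong hiso), .all hq⟩

theorem IsB.exists_iso_arr_of_isQ {b q : Formula} (hb : IsB b) (hq : IsQ q) :
    ∃ q', Iso (.arr b q) q' ∧ IsQ q' := by
  induction hb generalizing q with
  | ofQ hb => exact hb.exists_iso_arr hq
  | @and b₁ q₁ _ hq₁ ih =>
    obtain ⟨q₂, hiso₂, hq₂⟩ := hq₁.exists_iso_arr hq
    obtain ⟨q₃, hiso₃, hq₃⟩ := ih hq₂
    exact ⟨q₃, (Iso.curry b₁ q₁ q).trans ((Iso.arrCong (.refl b₁) hiso₂).trans hiso₃), hq₃⟩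

theorem IsB.exists_iso_arr {b₁ b₂ : Formula} (h₁ : IsB b₁) (h₂ : IsB b₂) :
    ∃ b, Iso (.arr b₁ b₂) b ∧ IsB b := by
  induction h₂ with
  | ofQ hq =>
    obtain ⟨q, hiso, hq⟩ := h₁.exists_iso_arr_of_isQ hq
    exact ⟨q, hiso, .ofQ hq⟩
  | @and b q _ hq ih =>
    obtain ⟨b', hb, hb'⟩ := ih
    obtain ⟨q', hiso, hq'⟩ := h₁.exists_iso_arr_of_isQ hq
    exact ⟨.and b' q', (Iso.distrib b₁ b q).trans (.andCong hb hiso), .and hb' hq'⟩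

theorem IsB.exists_iso_and {b₁ b₂ : Formula} (h₁ : IsB b₁) (h₂ : IsB b₂) :
    ∃ b, Iso (.and b₁ b₂) b ∧ IsB b := by
  induction h₂ with
  | ofQ hq => exact ⟨_, .refl _, .and h₁ hq⟩
  | @and b q _ hq ih =>
    obtain ⟨b', hb, hb'⟩ := ih
    exact ⟨.and b' q, (Iso.andAssoc b₁ b q).trans (.andCong hb (.refl q)), .and hb' hq⟩

theorem IsB.exists_iso_all {b : Formula} (hb : IsB b) : ∃ b', Iso (.all b) b' ∧ IsB b' := by
  induction hb with
  | ofQ hq => exact ⟨_, .refl _, .ofQ (.all hq)⟩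
  | @and b q _ hq ih =>
    obtain ⟨b', hb, hb'⟩ := ih
    exact ⟨.and b' (.all q), (Iso.allAnd b q).trans (.andCong hb (.refl _)), .and hb' (.all hq)⟩

theorem IsC.exists_iso_and {c₁ c₂ : Formula} (h₁ : IsC c₁) (h₂ : IsC c₂) :
    ∃ c, Iso (.and c₁ c₂) c ∧ IsC c := by
  cases h₁ with
  | top => exact ⟨c₂, .andTopL c₂, h₂⟩
  | ofB hb₁ =>
    cases h₂ with
    | top => exact ⟨c₁, .andTopR c₁, .ofB hb₁⟩
    | ofB hb₂ =>
      obtain ⟨b, hiso, hb⟩ := hb₁.exists_iso_and hb₂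
      exact ⟨b, hiso, .ofB hb⟩

theorem IsC.exists_iso_arr {c₁ c₂ : Formula} (h₁ : IsC c₁) (h₂ : IsC c₂) :
    ∃ c, Iso (.arr c₁ c₂) c ∧ IsC c := by
  cases h₂ with
  | top => exact ⟨.top, .arrTop c₁, .top⟩
  | ofB hb₂ =>
    cases h₁ with
    | top => exact ⟨c₂, .topArr c₂, .ofB hb₂⟩
    | ofB hb₁ =>
      obtain ⟨b, hiso, hb⟩ := hb₁.exists_iso_arr hb₂
      exact ⟨b, hiso, .ofB hb⟩

theorem IsC.exists_iso_all {c : Formula} : IsC c → ∃ c', Iso (.all c) c' ∧ IsC c'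
  | .top => ⟨.top, .allTop, .top⟩
  | .ofB hb =>
    have ⟨b, hiso, hb⟩ := hb.exists_iso_all
    ⟨b, hiso, .ofB hb⟩

/-- Every formula is isomorphic (modulo the congruence generated by the
type-isomorphism equations) to a formula in canonical form. -/
theorem exists_canonical_form : ∀ A : Formula, ∃ B : Formula, Iso A B ∧ IsC B := by
  intro A
  induction A with
  | top => exact ⟨.top, .refl _, .top⟩
  | bot => exact ⟨.bot, .refl _, .ofB (.ofQ (.ofA (.ofR .bot)))⟩
  | atom X ts => exact ⟨_, .refl _, .ofB (.ofQ (.ofA (.ofR (.atom X ts))))⟩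
  | arr A B ihA ihB =>
    obtain ⟨cA, hA, hcA⟩ := ihA
    obtain ⟨cB, hB, hcB⟩ := ihB
    obtain ⟨c, hiso, hc⟩ := hcA.exists_iso_arr hcB
    exact ⟨c, (Iso.arrCong hA hB).trans hiso, hc⟩
  | and A B ihA ihB =>
    obtain ⟨cA, hA, hcA⟩ := ihA
    obtain ⟨cB, hB, hcB⟩ := ihB
    obtain ⟨c, hiso, hc⟩ := hcA.exists_iso_and hcB
    exact ⟨c, (Iso.andCong hA hB).trans hiso, hc⟩
  | all A ih =>
    obtain ⟨cA, hA, hcA⟩ := ih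
    obtain ⟨c, hiso, hc⟩ := hcA.exists_iso_all
    exact ⟨c, (Iso.allCong hA).trans hiso, hc⟩
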